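/- Let h, s, v, m, w be natural numbers. If a holey Schröder design of type h^s v^1 exists and a holey Schröder design of type (hs)^m w^1 exists, then a holey Schröder design of type h^(sm) (w+v)^1 exists. -/

import Mathlib

open Classical in
/-- Existence of a holey Schröder design of type `h^n u^1`: `n` holes of size `h`
and one hole of size `u`. Blocks are ordered quadruples; the pairs in a block
`(a,b,c,d)` are colored `{a,b},{c,d}` with color 1, `{a,c},{b,d}` with color 2,
`{a,d},{b,c}` with color 3; every pair of points from distinct holes occurs with
each of the three colors in exactly one block. -/
def HSDExists (h n u : ℕ) : Prop :=
  ∃ (X : Type) (_ : Fintype X) (holes : Fin (n + 1) → Finset X)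
    (B : Multiset (X × X × X × X)),
    -- the first `n` holes have size `h`, the last hole has size `u`
    (∀ i : Fin (n + 1), (i : ℕ) < n → (holes i).card = h) ∧
    (holes (Fin.last n)).card = u ∧
    -- the holes partition the point set
    (∀ i j : Fin (n + 1), i ≠ j → Disjoint (holes i) (holes j)) ∧
    (∀ x : X, ∃ i, x ∈ holes i) ∧
    -- each block meets each hole in at most one point
    (∀ b ∈ B, ∀ i : Fin (n + 1),
      Multiset.countP (fun x => x ∈ holes i)
        ({b.1, b.2.1, b.2.2.1, b.2.2.2} : Multiset X) ≤ 1) ∧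
    -- every pair of points from distinct holes occurs with each color in exactly one block
    (∀ x y : X, (∀ i, ¬(x ∈ holes i ∧ y ∈ holes i)) →
      Multiset.countP
        (fun b => s(b.1, b.2.1) = s(x, y) ∨ s(b.2.2.1, b.2.2.2) = s(x, y)) B = 1 ∧
      Multiset.countP
        (fun b => s(b.1, b.2.2.1) = s(x, y) ∨ s(b.2.1, b.2.2.2) = s(x, y)) B = 1 ∧
      Multiset.countP
        (fun b => s(b.1, b.2.2.2) = s(x, y) ∨ s(b.2.1, b.2.2.1) = s(x, y)) B = 1)

/-!
Holes are encoded by a labelling `hole : X → κ` of the points, and an HSD of type `g^n u^1` is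
transported to the canonical point set `(Fin n × G) ⊕ U` with `|G| = g` and `|U| = u`, labelled by
the first coordinate and by `none` on `U`.

Lay the master HSD of type `(hs)^m w^1` on `(Fin m × (Fin s × Fin h)) ⊕ W` and, for each `i`, a
copy of the HSD of type `h^s v^1` on the master hole `{i} × (Fin s × Fin h)` together with a common
set `V` of `v` new points. A design laid down this way contains exactly the pairs its holes
separate, once in each colour. The new holes are the sets `{(i, k)} × Fin h` and `W ⊕ V`, and a
pair from distinct new holes is separated by exactly one of the designs: by the master design if
its points lie in distinct master holes, and otherwise by the copy filling their common master hole.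
-/

open scoped Classical

namespace HSD

variable {X Y κ : Type*}

abbrev Block (X : Type*) := X × X × X × X

namespace Block

def map (f : X → Y) (b : Block X) : Block Y := (f b.1, f b.2.1, f b.2.2.1, f b.2.2.2)

@[simp]
theorem map_id : Block.map (id : X → X) = id := rfl

def points (b : Block X) : Multiset X := {b.1, b.2.1, b.2.2.1, b.2.2.2}

-- Colours `1, 2, 3` are indexed by `0, 1, 2`.
def HasPair : Fin 3 → Block X → Sym2 X → Prop
  | 0, b, p => s(b.1, b.2.1) = p ∨ s(b.2.2.1, b.2.2.2) = p
  | 1, b, p => s(b.1, b.2.2.1) = p ∨ s(b.2.1, b.2.2.2) = p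
  | 2, b, p => s(b.1, b.2.2.2) = p ∨ s(b.2.1, b.2.2.1) = p

theorem points_map (f : X → Y) (b : Block X) : (b.map f).points = b.points.map f := by
  simp [map, points]

theorem hasPair_map_iff {f : X → Y} (hf : Function.Injective f) (c : Fin 3) (b : Block X)
    (p : Sym2 X) : (b.map f).HasPair c (p.map f) ↔ b.HasPair c p := by
  fin_cases c <;> simp [HasPair, map, ← Sym2.map_mk, (Sym2.map.injective hf).eq_iff]

theorem exists_eq_map_of_hasPair_map {f : X → Y} {c : Fin 3} {b : Block X} {q : Sym2 Y}
    (h : (b.map f).HasPair c q) : ∃ p : Sym2 X, p.map f = q := by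
  fin_cases c <;> rcases h with h | h <;> exact ⟨s(_, _), h⟩

theorem ne_of_hasPair {hole : X → κ} {b : Block X} (hb : (b.points.map hole).Nodup)
    {c : Fin 3} {x y : X} (h : b.HasPair c s(x, y)) : hole x ≠ hole y := by
  simp only [points, Multiset.insert_eq_cons, Multiset.map_cons, Multiset.nodup_cons,
    Multiset.mem_cons, Multiset.map_singleton, Multiset.mem_singleton, Multiset.nodup_singleton,
    not_or] at hb
  fin_cases c <;> rcases h with h | h <;> rcases Sym2.eq_iff.mp h with ⟨rfl, rfl⟩ | ⟨rfl, rfl⟩ <;>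
    tauto

end Block

noncomputable def pairCount (c : Fin 3) (B : Multiset (Block X)) (p : Sym2 X) : ℕ :=
  B.countP (·.HasPair c p)

def CoversExactly (B : Multiset (Block X)) (R : X → X → Prop) : Prop :=
  ∀ c x y, pairCount c B s(x, y) = if R x y then 1 else 0

theorem CoversExactly.map {B : Multiset (Block X)} {R : X → X → Prop} (hB : CoversExactly B R)
    {f : X → Y} (hf : Function.Injective f) :
    CoversExactly (B.map (Block.map f)) (Relation.Map R f f) := by
  intro c x y
  by_cases hxy : ∃ a b, f a = x ∧ f b = y
  · obtain ⟨a, b, rfl, rfl⟩ := hxy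
    have hR : Relation.Map R f f (f a) (f b) ↔ R a b := by
      simp [Relation.Map, hf.eq_iff]
    rw [hR, ← hB c a b, pairCount, pairCount, Multiset.countP_map, ← Multiset.countP_eq_card_filter]
    exact Multiset.countP_congr rfl fun q _ => propext (Block.hasPair_map_iff hf c q s(a, b))
  · have hR : ¬ Relation.Map R f f x y := fun ⟨a, b, _, ha, hb⟩ => hxy ⟨a, b, ha, hb⟩
    rw [if_neg hR, pairCount, Multiset.countP_eq_zero]
    intro q hq hpair
    obtain ⟨q, -, rfl⟩ := Multiset.mem_map.mp hq
    obtain ⟨p, hp⟩ := Block.exists_eq_map_of_hasPair_map (f := f) hpair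
    induction p using Sym2.ind with
    | h a b =>
      rcases Sym2.eq_iff.mp hp with ⟨ha, hb⟩ | ⟨ha, hb⟩
      · exact hxy ⟨a, b, ha, hb⟩
      · exact hxy ⟨b, a, hb, ha⟩

theorem CoversExactly.add {B₁ B₂ : Multiset (Block X)} {R₁ R₂ : X → X → Prop}
    (h₁ : CoversExactly B₁ R₁) (h₂ : CoversExactly B₂ R₂) (hdisj : ∀ x y, R₁ x y → ¬ R₂ x y) :
    CoversExactly (B₁ + B₂) (R₁ ⊔ R₂) := by
  intro c x y
  have hsplit : pairCount c (B₁ + B₂) s(x, y) = pairCount c B₁ s(x, y) + pairCount c B₂ s(x, y) :=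
    Multiset.countP_add _ _ _
  rw [hsplit, h₁, h₂]
  by_cases hR₁ : R₁ x y
  · simp [hR₁, hdisj x y hR₁]
  · simp [hR₁]

theorem CoversExactly.sum {ι : Type*} [Fintype ι] {B : ι → Multiset (Block X)}
    {R : ι → X → X → Prop} (hB : ∀ i, CoversExactly (B i) (R i))
    (hdisj : ∀ x y i j, R i x y → R j x y → i = j) :
    CoversExactly (∑ i, B i) (fun x y => ∃ i, R i x y) := by
  intro c x y
  have hsplit : pairCount c (∑ i, B i) s(x, y) = ∑ i, pairCount c (B i) s(x, y) :=
    map_sum (Multiset.countPAddMonoidHom _) B Finset.univ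
  rw [hsplit, Finset.sum_congr rfl fun i _ => hB i c x y]
  by_cases hR : ∃ i, R i x y
  · obtain ⟨i, hi⟩ := hR
    rw [Finset.sum_eq_single i (fun j _ hji => if_neg fun hj => hji (hdisj x y j i hj hi))
      (by simp), if_pos hi, if_pos ⟨i, hi⟩]
  · simp only [not_exists] at hR
    simp [hR]

abbrev SeparatedBy (hole : X → κ) (f : X → Y) : Y → Y → Prop :=
  Relation.Map (fun a b => hole a ≠ hole b) f f

structure IsHSD (hole : X → κ) (B : Multiset (Block X)) : Prop where
  nodup_holes : ∀ b ∈ B, (b.points.map hole).Nodup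
  pairCount_eq_one : ∀ c x y, hole x ≠ hole y → pairCount c B s(x, y) = 1

namespace IsHSD

variable {hole : X → κ} {B : Multiset (Block X)}

theorem coversExactly (hB : IsHSD hole B) : CoversExactly B (fun x y => hole x ≠ hole y) := by
  intro c x y
  split_ifs with hxy
  · exact hB.pairCount_eq_one c x y hxy
  · refine Multiset.countP_eq_zero.mpr fun b hb hpair => ?_
    exact Block.ne_of_hasPair (hB.nodup_holes b hb) hpair (not_not.mp hxy)

theorem of_coversExactly {R : X → X → Prop} (hnodup : ∀ b ∈ B, (b.points.map hole).Nodup)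
    (hB : CoversExactly B R) (hR : ∀ x y, hole x ≠ hole y → R x y) : IsHSD hole B :=
  ⟨hnodup, fun c x y hxy => by rw [hB, if_pos (hR x y hxy)]⟩

theorem nodup_holes_map {κ' : Type*} (hB : IsHSD hole B) {f : X → Y} {hole' : Y → κ'}
    (φ : κ' → κ) (hφ : ∀ x, φ (hole' (f x)) = hole x) :
    ∀ b ∈ B.map (Block.map f), (b.points.map hole').Nodup := by
  intro b hb
  obtain ⟨b, hbB, rfl⟩ := Multiset.mem_map.mp hb
  refine Multiset.Nodup.of_map φ ?_
  simpa [Block.points_map, Multiset.map_map, Function.comp_def, hφ] using hB.nodup_holes b hbB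

theorem coversExactly_map (hB : IsHSD hole B) {f : X → Y} (hf : Function.Injective f) :
    CoversExactly (B.map (Block.map f)) (SeparatedBy hole f) :=
  hB.coversExactly.map hf

theorem map_equiv {κ' : Type*} (hB : IsHSD hole B)
    (e : X ≃ Y) (σ : κ ≃ κ') {hole' : Y → κ'} (he : ∀ x, hole' (e x) = σ (hole x)) :
    IsHSD hole' (B.map (Block.map e)) := by
  refine .of_coversExactly (hB.nodup_holes_map σ.symm fun x => by simp [he])
    (hB.coversExactly_map e.injective) fun x y hxy => ⟨e.symm x, e.symm y, ?_, by simp, by simp⟩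
  simpa [← σ.injective.ne_iff, ← he] using hxy

end IsHSD

theorem isHSD_iff_of_mem_iff {ι : Type*} {holes : ι → Finset X} {hole : X → ι}
    (hmem : ∀ x i, x ∈ holes i ↔ hole x = i) {B : Multiset (Block X)} :
    IsHSD hole B ↔ (∀ b ∈ B, ∀ i, Multiset.countP (fun x => x ∈ holes i) b.points ≤ 1) ∧
      ∀ x y : X, (∀ i, ¬(x ∈ holes i ∧ y ∈ holes i)) →
        Multiset.countP
          (fun b => s(b.1, b.2.1) = s(x, y) ∨ s(b.2.2.1, b.2.2.2) = s(x, y)) B = 1 ∧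
        Multiset.countP
          (fun b => s(b.1, b.2.2.1) = s(x, y) ∨ s(b.2.1, b.2.2.2) = s(x, y)) B = 1 ∧
        Multiset.countP
          (fun b => s(b.1, b.2.2.2) = s(x, y) ∨ s(b.2.1, b.2.2.1) = s(x, y)) B = 1 := by
  have hcount : ∀ x y,
      pairCount 0 B s(x, y) = Multiset.countP
        (fun b => s(b.1, b.2.1) = s(x, y) ∨ s(b.2.2.1, b.2.2.2) = s(x, y)) B ∧
      pairCount 1 B s(x, y) = Multiset.countP
        (fun b => s(b.1, b.2.2.1) = s(x, y) ∨ s(b.2.1, b.2.2.2) = s(x, y)) B ∧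
      pairCount 2 B s(x, y) = Multiset.countP
        (fun b => s(b.1, b.2.2.2) = s(x, y) ∨ s(b.2.1, b.2.2.1) = s(x, y)) B := fun _ _ =>
    ⟨Multiset.countP_congr rfl fun _ _ => rfl, Multiset.countP_congr rfl fun _ _ => rfl,
      Multiset.countP_congr rfl fun _ _ => rfl⟩
  have hsep : ∀ x y, (∀ i, ¬(x ∈ holes i ∧ y ∈ holes i)) ↔ hole x ≠ hole y := by
    simp [hmem, ne_comm]
  have hnodup : ∀ b : Block X, (b.points.map hole).Nodup ↔
      ∀ i, Multiset.countP (fun x => x ∈ holes i) b.points ≤ 1 := by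
    simp [Multiset.nodup_iff_count_le_one, Multiset.count_map, Multiset.countP_eq_card_filter,
      hmem, eq_comm]
  constructor
  · rintro ⟨hblocks, hpairs⟩
    refine ⟨fun b hb => (hnodup b).mp (hblocks b hb), fun x y hxy => ?_⟩
    rw [hsep] at hxy
    obtain ⟨h0, h1, h2⟩ := hcount x y
    exact ⟨h0 ▸ hpairs 0 x y hxy, h1 ▸ hpairs 1 x y hxy, h2 ▸ hpairs 2 x y hxy⟩
  · rintro ⟨hblocks, hpairs⟩
    refine ⟨fun b hb => (hnodup b).mpr (hblocks b hb), fun c x y hxy => ?_⟩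
    obtain ⟨h0, h1, h2⟩ := hpairs x y ((hsep x y).mpr hxy)
    match c with
    | 0 => exact (hcount x y).1.trans h0
    | 1 => exact (hcount x y).2.1.trans h1
    | 2 => exact (hcount x y).2.2.trans h2

theorem exists_mem_iff_of_partition {ι : Type*} {holes : ι → Finset X}
    (hdisj : ∀ i j, i ≠ j → Disjoint (holes i) (holes j)) (hcover : ∀ x, ∃ i, x ∈ holes i) :
    ∃ hole : X → ι, ∀ x i, x ∈ holes i ↔ hole x = i := by
  choose hole hhole using hcover
  exact ⟨hole, fun x i => ⟨fun hx => by_contra fun hne =>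
    Finset.disjoint_left.mp (hdisj _ _ hne) (hhole x) hx, fun h => h ▸ hhole x⟩⟩

section Canonical

variable {ι G U : Type*} [Fintype ι] [Fintype G] [Fintype U]

def canonicalHole : (ι × G) ⊕ U → Option ι :=
  Sum.elim (fun p => some p.1) fun _ => none

theorem card_canonicalHole_eq_some (i : ι) :
    Fintype.card {q : (ι × G) ⊕ U // canonicalHole q = some i} = Fintype.card G := by
  rw [Fintype.card_subtype, Finset.card_filter, Fintype.sum_sum_type, Fintype.sum_prod_type]
  simp [canonicalHole]

theorem card_canonicalHole_eq_none :
    Fintype.card {q : (ι × G) ⊕ U // canonicalHole q = none} = Fintype.card U := by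
  rw [Fintype.card_subtype, Finset.card_filter, Fintype.sum_sum_type]
  simp [canonicalHole]

variable {n : ℕ}

noncomputable def finSuccEquivOption (hι : Fintype.card ι = n) : Fin (n + 1) ≃ Option ι :=
  finSuccEquivLast.trans (Equiv.optionCongr (Fintype.equivFinOfCardEq hι).symm)

theorem finSuccEquivOption_last (hι : Fintype.card ι = n) :
    finSuccEquivOption hι (Fin.last n) = none := by
  simp [finSuccEquivOption]

theorem finSuccEquivOption_eq_some (hι : Fintype.card ι = n) {j : Fin (n + 1)}
    (hj : (j : ℕ) < n) : ∃ i, finSuccEquivOption hι j = some i := by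
  obtain ⟨j, rfl⟩ : ∃ j' : Fin n, j = j'.castSucc := ⟨⟨j, hj⟩, rfl⟩
  simp only [finSuccEquivOption, Equiv.trans_apply, finSuccEquivLast_castSucc]
  exact ⟨_, rfl⟩

theorem _root_.HSDExists.exists_isHSD {g u : ℕ} (hex : HSDExists g n u)
    (hι : Fintype.card ι = n) (hG : Fintype.card G = g) (hU : Fintype.card U = u) :
    ∃ B : Multiset (Block ((ι × G) ⊕ U)), IsHSD canonicalHole B := by
  obtain ⟨X, _, holes, B, hcard, hlast, hdisj, hcover, hblocks, hpairs⟩ := hex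
  obtain ⟨hole, hmem⟩ := exists_mem_iff_of_partition hdisj hcover
  have hB : IsHSD hole B := (isHSD_iff_of_mem_iff hmem).mpr ⟨hblocks, hpairs⟩
  set σ := finSuccEquivOption hι
  have hfiber : ∀ o, Fintype.card {x // σ (hole x) = o} =
      Fintype.card {q : (ι × G) ⊕ U // canonicalHole q = o} := by
    intro o
    rw [Fintype.card_of_subtype (holes (σ.symm o)) fun x => by rw [hmem, σ.eq_symm_apply]]
    rcases o with _ | i
    · rw [card_canonicalHole_eq_none, hU, ← hlast, ← finSuccEquivOption_last hι,
        σ.symm_apply_apply]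
    · have hlt : (σ.symm (some i) : ℕ) < n := Fin.val_lt_last fun h =>
        Option.some_ne_none _ ((σ.symm_apply_eq.mp h).trans (finSuccEquivOption_last hι))
      rw [card_canonicalHole_eq_some, hG, hcard _ hlt]
  -- Equal fibre sizes give a bijection onto the canonical point set that respects the holes.
  exact ⟨_, hB.map_equiv (.ofFiberEquiv fun o => Fintype.equivOfCardEq (hfiber o)) σ
    (Equiv.ofFiberEquiv_map _)⟩

end Canonical

theorem _root_.HSDExists.of_isHSD {ι G U : Type} [Fintype ι] [Fintype G] [Fintype U]
    {B : Multiset (Block ((ι × G) ⊕ U))} (hB : IsHSD canonicalHole B) :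
    HSDExists (Fintype.card G) (Fintype.card ι) (Fintype.card U) := by
  set σ := finSuccEquivOption (ι := ι) rfl
  set hole := fun q => σ.symm (canonicalHole q)
  have hB' : IsHSD hole B := by
    simpa using hB.map_equiv (Equiv.refl _) σ.symm (hole' := hole) fun _ => rfl
  have hcard : ∀ j, ({q | hole q = j} : Finset _).card =
      Fintype.card {q : (ι × G) ⊕ U // canonicalHole q = σ j} := by
    intro j
    rw [Fintype.card_subtype]
    simp [hole, σ.symm_apply_eq]
  refine ⟨(ι × G) ⊕ U, inferInstance, fun j => {q | hole q = j}, B, ?_, ?_, ?_, ?_,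
    (isHSD_iff_of_mem_iff fun q j => by simp).mp hB'⟩
  · intro j hj
    obtain ⟨i, hi⟩ := finSuccEquivOption_eq_some (ι := ι) rfl hj
    rw [hcard, hi, card_canonicalHole_eq_some]
  · rw [hcard, finSuccEquivOption_last, card_canonicalHole_eq_none]
  · intro i j hij
    rw [Finset.disjoint_left]
    intro q hi hj
    simp only [Finset.mem_filter, Finset.mem_univ, true_and] at hi hj
    exact hij (hi.symm.trans hj)
  · intro q
    exact ⟨hole q, by simp⟩

section Filling

variable {I K G V W : Type*}

def masterEmbedding : (I × (K × G)) ⊕ W → ((I × K) × G) ⊕ (W ⊕ V) :=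
  Sum.map (Equiv.prodAssoc I K G).symm Sum.inl

def fillingEmbedding (i : I) : (K × G) ⊕ V → ((I × K) × G) ⊕ (W ⊕ V) :=
  Sum.map (fun p => ((i, p.1), p.2)) Sum.inr

theorem masterEmbedding_injective :
    Function.Injective (masterEmbedding : _ → ((I × K) × G) ⊕ (W ⊕ V)) :=
  Sum.map_injective.mpr ⟨Equiv.injective _, Sum.inl_injective⟩

theorem fillingEmbedding_injective (i : I) :
    Function.Injective (fillingEmbedding i : _ → ((I × K) × G) ⊕ (W ⊕ V)) :=
  Sum.map_injective.mpr ⟨fun p q h => by simpa [Prod.ext_iff] using h, Sum.inr_injective⟩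

theorem separatedBy_fillingEmbedding_unique {x y : ((I × K) × G) ⊕ (W ⊕ V)} {i j : I}
    (hi : SeparatedBy canonicalHole (fillingEmbedding i) x y)
    (hj : SeparatedBy canonicalHole (fillingEmbedding j) x y) : i = j := by
  revert hi hj
  rcases x with ⟨⟨i, k⟩, g⟩ | w | v <;> rcases y with ⟨⟨i', k'⟩, g'⟩ | w' | v' <;>
    simp +contextual [Relation.Map, fillingEmbedding, canonicalHole, Sum.exists]

theorem not_separatedBy_fillingEmbedding {x y : ((I × K) × G) ⊕ (W ⊕ V)}
    (hxy : SeparatedBy canonicalHole masterEmbedding x y) (i : I) :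
    ¬ SeparatedBy canonicalHole (fillingEmbedding i) x y := by
  revert hxy
  rcases x with ⟨⟨i, k⟩, g⟩ | w | v <;> rcases y with ⟨⟨i', k'⟩, g'⟩ | w' | v' <;>
    simp +contextual [Relation.Map, masterEmbedding, fillingEmbedding, canonicalHole, Sum.exists]

theorem separatedBy_masterEmbedding_or_fillingEmbedding {x y : ((I × K) × G) ⊕ (W ⊕ V)}
    (hxy : canonicalHole x ≠ canonicalHole y) :
    SeparatedBy canonicalHole masterEmbedding x y ∨
      ∃ i, SeparatedBy canonicalHole (fillingEmbedding i) x y := by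
  revert hxy
  rcases x with ⟨⟨i, k⟩, g⟩ | w | v <;> rcases y with ⟨⟨i', k'⟩, g'⟩ | w' | v' <;>
    simp [Relation.Map, masterEmbedding, fillingEmbedding, canonicalHole, Sum.exists,
      or_iff_not_imp_left, imp_and]

theorem IsHSD.fill [Fintype I] {BZ : Multiset (Block ((K × G) ⊕ V))} (hZ : IsHSD canonicalHole BZ)
    {BY : Multiset (Block ((I × (K × G)) ⊕ W))} (hY : IsHSD canonicalHole BY) :
    IsHSD (canonicalHole : ((I × K) × G) ⊕ (W ⊕ V) → Option (I × K))
      (BY.map (Block.map masterEmbedding) + ∑ i, BZ.map (Block.map (fillingEmbedding i))) := by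
  refine .of_coversExactly ?_ ((hY.coversExactly_map masterEmbedding_injective).add
    (.sum (fun i => hZ.coversExactly_map (fillingEmbedding_injective i))
      fun _ _ _ _ => separatedBy_fillingEmbedding_unique)
    fun _ _ hxy ⟨i, hi⟩ => not_separatedBy_fillingEmbedding hxy i hi)
    fun _ _ => separatedBy_masterEmbedding_or_fillingEmbedding
  intro b hb
  rcases Multiset.mem_add.mp hb with hb | hb
  · refine hY.nodup_holes_map (Option.map Prod.fst) (fun y => ?_) b hb
    rcases y with ⟨i, k, g⟩ | w <;> rfl
  · obtain ⟨i, -, hb⟩ := Multiset.mem_sum.mp hb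
    refine hZ.nodup_holes_map (Option.map Prod.snd) (fun z => ?_) b hb
    rcases z with ⟨k, g⟩ | v <;> rfl

end Filling

end HSD

theorem hsd_filling_holes (h s v m w : ℕ)
    (h1 : HSDExists h s v) (h2 : HSDExists (h * s) m w) :
    HSDExists h (s * m) (w + v) := by
  obtain ⟨BZ, hZ⟩ := h1.exists_isHSD (Fintype.card_fin s) (Fintype.card_fin h) (Fintype.card_fin v)
  obtain ⟨BY, hY⟩ := h2.exists_isHSD (Fintype.card_fin m) (G := Fin s × Fin h)
    (by simp [mul_comm]) (Fintype.card_fin w)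
  simpa [mul_comm] using HSDExists.of_isHSD (hZ.fill hY)
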